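/- Let A ∈ ℝ^{n×n} and suppose A is not globally unidentifiable, i.e., there exists at least one x₀* ∈ ℝⁿ from which A is identifiable. Then the set {x₀ ∈ ℝⁿ : A is not identifiable from x₀} has Lebesgue measure zero in ℝⁿ. -/

import Mathlib

open MeasureTheory

/-- `A` is *identifiable from* the initial condition `x₀` if no other matrix `B ≠ A`
produces the same solution trajectory `t ↦ exp (t • B) *ᵥ x₀` of the linear ODE. -/
def IdentifiableFrom {n : ℕ} (A : Matrix (Fin n) (Fin n) ℝ) (x₀ : Fin n → ℝ) : Prop :=
  ¬ ∃ B : Matrix (Fin n) (Fin n) ℝ, B ≠ A ∧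
      ∀ t : ℝ, (NormedSpace.exp (t • B)).mulVec x₀ = (NormedSpace.exp (t • A)).mulVec x₀

/-- `A` is *globally unidentifiable* if it is not identifiable from any initial condition. -/
def GloballyUnidentifiable {n : ℕ} (A : Matrix (Fin n) (Fin n) ℝ) : Prop :=
  ∀ x₀ : Fin n → ℝ, ¬ IdentifiableFrom A x₀

section Aux

open NormedSpace Matrix

/-! ### Zero sets of nonzero multivariate polynomials are Lebesgue-null -/

lemma mv_zero_set_measure_zero : ∀ (n : ℕ) (p : MvPolynomial (Fin n) ℝ), p ≠ 0 →
    volume {x : Fin n → ℝ | MvPolynomial.eval x p = 0} = 0 := by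
  intro n
  induction n with
  | zero =>
    intro p hp
    obtain ⟨c, rfl⟩ := MvPolynomial.C_surjective (Fin 0) p
    have hc : c ≠ 0 := fun h => hp (by simp [h])
    simp [hc]
  | succ n ih =>
    intro p hp
    set q : Polynomial (MvPolynomial (Fin n) ℝ) := MvPolynomial.finSuccEquiv ℝ n p with hq
    have hq0 : q ≠ 0 := by
      rw [hq]
      exact (map_ne_zero_iff _ (AlgEquiv.injective _)).2 hp
    have hlead : q.leadingCoeff ≠ 0 := Polynomial.leadingCoeff_ne_zero.2 hq0
    set T : Set (ℝ × (Fin n → ℝ)) :=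
      {z | MvPolynomial.eval (Fin.cons z.1 z.2) p = 0} with hT
    have hcont : Continuous fun z : ℝ × (Fin n → ℝ) => MvPolynomial.eval (Fin.cons z.1 z.2) p :=
      (MvPolynomial.continuous_eval p).comp
        (continuous_pi (Fin.cases continuous_fst fun j => (continuous_apply j).comp continuous_snd))
    have hTmeas : MeasurableSet T := (isClosed_singleton.preimage hcont : IsClosed T).measurableSet
    have hmp := measurePreserving_piFinSuccAbove (fun _ : Fin (n+1) => (volume : Measure ℝ)) 0
    have hpre : (MeasurableEquiv.piFinSuccAbove (fun _ : Fin (n+1) => ℝ) 0) ⁻¹' T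
        = {x : Fin (n+1) → ℝ | MvPolynomial.eval x p = 0} := by
      ext x
      simp only [Set.mem_preimage, MeasurableEquiv.piFinSuccAbove, hT, Set.mem_setOf_eq]
      change MvPolynomial.eval (Fin.cons (x 0) (Fin.removeNth 0 x)) p = 0 ↔ MvPolynomial.eval x p = 0
      rw [Fin.removeNth_zero, Fin.cons_self_tail]
    have hvol : volume {x : Fin (n+1) → ℝ | MvPolynomial.eval x p = 0}
        = (volume.prod volume) T := by
      rw [← hpre]
      exact hmp.measure_preimage hTmeas.nullMeasurableSet
    rw [hvol]
    have hswap : (volume.prod volume) T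
        = ((volume : Measure (Fin n → ℝ)).prod (volume : Measure ℝ)) (Prod.swap ⁻¹' T) := by
      rw [← Measure.prod_swap]
      exact Measure.map_apply measurable_swap hTmeas
    rw [hswap]
    have hTmeas' : MeasurableSet (Prod.swap ⁻¹' T) := measurable_swap hTmeas
    rw [Measure.measure_prod_null hTmeas']
    set N : Set (Fin n → ℝ) := {y | MvPolynomial.eval y (q.coeff q.natDegree) = 0} with hN
    have hNnull : volume N = 0 := ih _ hlead
    refine Filter.eventuallyEq_of_mem (compl_mem_ae_iff.2 hNnull) ?_
    intro y hy
    have hP : (q.map (MvPolynomial.eval y)) ≠ 0 := by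
      intro h0
      apply hy
      show MvPolynomial.eval y (q.coeff q.natDegree) = 0
      have h1 : (q.map (MvPolynomial.eval y)).coeff q.natDegree
          = MvPolynomial.eval y (q.coeff q.natDegree) := Polynomial.coeff_map _ _
      rw [h0] at h1
      simpa using h1.symm
    have hfin : Set.Finite {a : ℝ | (q.map (MvPolynomial.eval y)).eval a = 0} :=
      Polynomial.finite_setOf_isRoot hP
    have : (Prod.mk y ⁻¹' (Prod.swap ⁻¹' T)) = {a : ℝ | (q.map (MvPolynomial.eval y)).eval a = 0} := by
      ext a
      simp only [Set.mem_preimage, Set.mem_setOf_eq, Prod.swap_prod_mk, hT]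
      rw [MvPolynomial.eval_eq_eval_mv_eval', hq]
    show volume (Prod.mk y ⁻¹' (Prod.swap ⁻¹' T)) = 0
    rw [this]
    exact hfin.measure_zero volume

/-! ### The Krylov matrix -/

noncomputable def krylov {n : ℕ} (A : Matrix (Fin n) (Fin n) ℝ) (x : Fin n → ℝ) :
    Matrix (Fin n) (Fin n) ℝ :=
  Matrix.of fun i j => (A ^ (j : ℕ) *ᵥ x) i

lemma sum_mulVec' {N : ℕ} {ι : Type*} (s : Finset ι) (f : ι → Matrix (Fin N) (Fin N) ℝ)
    (v : Fin N → ℝ) : (∑ i ∈ s, f i) *ᵥ v = ∑ i ∈ s, f i *ᵥ v := by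
  funext j
  simp [Matrix.mulVec, dotProduct, Finset.sum_apply, Finset.sum_mul,
    Matrix.sum_apply]
  rw [Finset.sum_comm]

lemma pow_mulVec_mem_range {n : ℕ} (A : Matrix (Fin n) (Fin n) ℝ) (x : Fin n → ℝ) :
    ∀ k : ℕ, A ^ k *ᵥ x ∈ LinearMap.range (Matrix.mulVecLin (krylov A x)) := by
  intro k
  induction k using Nat.strong_induction_on with
  | _ k ih =>
    rcases lt_or_ge k n with hk | hk
    · refine ⟨Pi.single (⟨k, hk⟩ : Fin n) 1, ?_⟩
      rw [Matrix.mulVecLin_apply, Matrix.mulVec_single]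
      funext i
      simp [krylov]
    · rcases Nat.eq_zero_or_pos n with h0 | hn
      · subst h0
        have : A ^ k *ᵥ x = 0 := Subsingleton.elim _ _
        rw [this]
        exact Submodule.zero_mem _
      have hCH := Matrix.aeval_self_charpoly A
      have hdeg : A.charpoly.natDegree = n := by simpa using A.charpoly_natDegree_eq_dim
      have hsum := Polynomial.aeval_eq_sum_range (p := A.charpoly) A
      rw [hCH, hdeg, Finset.sum_range_succ] at hsum
      have hm : A.charpoly.coeff n = 1 := by
        have := A.charpoly_monic.coeff_natDegree
        rwa [hdeg] at this
      rw [hm, one_smul] at hsum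
      have hAn : A ^ n = -∑ i ∈ Finset.range n, A.charpoly.coeff i • A ^ i :=
        eq_neg_of_add_eq_zero_right hsum.symm
      have hAk : A ^ k = -∑ i ∈ Finset.range n, A.charpoly.coeff i • A ^ (k - n + i) := by
        have h1 : A ^ k = A ^ (k - n) * A ^ n := by
          rw [← pow_add, Nat.sub_add_cancel hk]
        rw [h1, hAn, mul_neg, Finset.mul_sum]
        congr 1
        refine Finset.sum_congr rfl fun i _ => ?_
        rw [mul_smul_comm, ← pow_add]
      rw [hAk, Matrix.neg_mulVec, sum_mulVec']
      refine Submodule.neg_mem _ (Submodule.sum_mem _ fun i hi => ?_)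
      rw [Matrix.smul_mulVec]
      refine Submodule.smul_mem _ _ (ih _ ?_)
      have hi' : i < n := Finset.mem_range.1 hi
      omega

/-! ### Analysis on matrices, with a local choice of norm -/

attribute [local instance] Matrix.linftyOpNormedAddCommGroup Matrix.linftyOpNormedRing
  Matrix.linftyOpNormedAlgebra

noncomputable def mulVecCLM {n : ℕ} (C : Matrix (Fin n) (Fin n) ℝ) (x : Fin n → ℝ) :
    Matrix (Fin n) (Fin n) ℝ →L[ℝ] (Fin n → ℝ) :=
  LinearMap.toContinuousLinearMap
    { toFun := fun M => C *ᵥ (M *ᵥ x)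
      map_add' := fun M N => by simp [Matrix.add_mulVec, Matrix.mulVec_add]
      map_smul' := fun c M => by
        simp [Matrix.smul_mulVec, Matrix.mulVec_smul] }

lemma pow_annihilate {n : ℕ} (A B : Matrix (Fin n) (Fin n) ℝ) (x : Fin n → ℝ)
    (h : ∀ t : ℝ, (exp (t • B)) *ᵥ x = (exp (t • A)) *ᵥ x) :
    ∀ k : ℕ, ((B - A) * A ^ k) *ᵥ x = 0 := by
  have key : ∀ k : ℕ, ∀ t : ℝ, ((B - A) * A ^ k) *ᵥ (exp (t • A) *ᵥ x) = 0 := by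
    intro k
    induction k with
    | zero =>
      intro t
      have hB : HasDerivAt (fun s : ℝ => (mulVecCLM 1 x) (exp (s • B)))
          ((mulVecCLM 1 x) (B * exp (t • B))) t :=
        ((mulVecCLM 1 x).hasFDerivAt.comp_hasDerivAt t (hasDerivAt_exp_smul_const' B t))
      have hA : HasDerivAt (fun s : ℝ => (mulVecCLM 1 x) (exp (s • A)))
          ((mulVecCLM 1 x) (A * exp (t • A))) t :=
        ((mulVecCLM 1 x).hasFDerivAt.comp_hasDerivAt t (hasDerivAt_exp_smul_const' A t))
      have hfun : (fun s : ℝ => (mulVecCLM 1 x) (exp (s • B)))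
          = (fun s : ℝ => (mulVecCLM 1 x) (exp (s • A))) := by
        funext s
        show (1 : Matrix (Fin n) (Fin n) ℝ) *ᵥ (exp (s • B) *ᵥ x)
          = (1 : Matrix (Fin n) (Fin n) ℝ) *ᵥ (exp (s • A) *ᵥ x)
        rw [h s]
      rw [hfun] at hB
      have := hB.unique hA
      have h2 : (1 : Matrix (Fin n) (Fin n) ℝ) *ᵥ ((B * exp (t • B)) *ᵥ x)
          = (1 : Matrix (Fin n) (Fin n) ℝ) *ᵥ ((A * exp (t • A)) *ᵥ x) := by
        simpa [mulVecCLM, Matrix.mulVec_mulVec] using this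
      simp only [Matrix.one_mulVec, ← Matrix.mulVec_mulVec] at h2
      rw [h t] at h2
      rw [pow_zero, mul_one, Matrix.sub_mulVec]
      rw [h2, sub_self]
    | succ k ihk =>
      intro t
      set C := (B - A) * A ^ k with hC
      have hD : HasDerivAt (fun s : ℝ => (mulVecCLM C x) (exp (s • A)))
          ((mulVecCLM C x) (A * exp (t • A))) t :=
        ((mulVecCLM C x).hasFDerivAt.comp_hasDerivAt t (hasDerivAt_exp_smul_const' A t))
      have hzero : (fun s : ℝ => (mulVecCLM C x) (exp (s • A)))
          = (fun _ : ℝ => (0 : Fin n → ℝ)) := by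
        funext s
        exact ihk s
      rw [hzero] at hD
      have h0 : (mulVecCLM C x) (A * exp (t • A)) = 0 :=
        hD.unique (hasDerivAt_const t 0)
      have h1 : C *ᵥ ((A * exp (t • A)) *ᵥ x) = 0 := h0
      have hmul : (B - A) * A ^ k * (A * exp (t • A))
          = ((B - A) * A ^ (k + 1)) * exp (t • A) := by
        rw [← mul_assoc, mul_assoc (B - A), ← pow_succ]
      rw [Matrix.mulVec_mulVec, hC, hmul, ← Matrix.mulVec_mulVec] at h1
      exact h1
  intro k
  have := key k 0
  simpa [exp_zero] using this

noncomputable def mulVecCLM' {n : ℕ} (x : Fin n → ℝ) :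
    Matrix (Fin n) (Fin n) ℝ →L[ℝ] (Fin n → ℝ) :=
  LinearMap.toContinuousLinearMap
    { toFun := fun M => M *ᵥ x
      map_add' := fun M N => by simp [Matrix.add_mulVec]
      map_smul' := fun c M => by simp [Matrix.smul_mulVec] }

lemma exp_mulVec_eq_of_pow_eq {n : ℕ} (A B : Matrix (Fin n) (Fin n) ℝ) (x : Fin n → ℝ)
    (hpow : ∀ k : ℕ, B ^ k *ᵥ x = A ^ k *ᵥ x) (t : ℝ) :
    exp (t • B) *ᵥ x = exp (t • A) *ᵥ x := by
  have hexp : ∀ M : Matrix (Fin n) (Fin n) ℝ,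
      exp (t • M) *ᵥ x = ∑' k : ℕ, ((k.factorial : ℝ)⁻¹ • (t ^ k • (M ^ k *ᵥ x))) := by
    intro M
    have h1 : exp (t • M) = ∑' k : ℕ, ((k.factorial : ℝ)⁻¹ • (t • M) ^ k) := by
      rw [NormedSpace.exp_eq_tsum (𝕂 := ℝ)]
    have hsummable : Summable fun k : ℕ => ((k.factorial : ℝ)⁻¹ • (t • M) ^ k) :=
      NormedSpace.expSeries_summable' (𝕂 := ℝ) (t • M)
    calc exp (t • M) *ᵥ x = (mulVecCLM' x) (∑' k : ℕ, ((k.factorial : ℝ)⁻¹ • (t • M) ^ k)) := by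
          rw [← h1]; rfl
      _ = ∑' k : ℕ, (mulVecCLM' x) ((k.factorial : ℝ)⁻¹ • (t • M) ^ k) :=
          (mulVecCLM' x).map_tsum hsummable
      _ = ∑' k : ℕ, ((k.factorial : ℝ)⁻¹ • (t ^ k • (M ^ k *ᵥ x))) := by
          refine tsum_congr fun k => ?_
          show ((k.factorial : ℝ)⁻¹ • (t • M) ^ k) *ᵥ x = _
          rw [smul_pow, Matrix.smul_mulVec, Matrix.smul_mulVec]
  rw [hexp A, hexp B]
  exact tsum_congr fun k => by rw [hpow k]

lemma exists_other_of_det_eq_zero {n : ℕ} (A : Matrix (Fin n) (Fin n) ℝ) (x : Fin n → ℝ)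
    (hdet : (krylov A x).det = 0) :
    ∃ B : Matrix (Fin n) (Fin n) ℝ, B ≠ A ∧
      ∀ t : ℝ, exp (t • B) *ᵥ x = exp (t • A) *ᵥ x := by
  set R : Submodule ℝ (Fin n → ℝ) := LinearMap.range (Matrix.mulVecLin (krylov A x)) with hR
  have hRne : R ≠ ⊤ := by
    intro htop
    have hsurj : Function.Surjective (krylov A x).mulVec := by
      intro v
      have : v ∈ R := htop ▸ Submodule.mem_top
      obtain ⟨c, hc⟩ := this
      exact ⟨c, hc⟩
    have := Matrix.mulVec_surjective_iff_isUnit.1 hsurj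
    have : IsUnit (krylov A x).det := this.map Matrix.detMonoidHom
    rw [hdet] at this
    exact (not_isUnit_zero : ¬ IsUnit (0:ℝ)) this
  obtain ⟨W, hW⟩ := Submodule.exists_isCompl R
  have hWne : W ≠ ⊥ := by
    intro hbot
    apply hRne
    have := hW.codisjoint
    rw [codisjoint_iff] at this
    rw [hbot, sup_bot_eq] at this
    exact this
  obtain ⟨w, hwW, hw0⟩ := Submodule.exists_mem_ne_zero_of_ne_bot hWne
  set prj := Submodule.linearProjOfIsCompl W R hW.symm with hprj
  set N : (Fin n → ℝ) →ₗ[ℝ] (Fin n → ℝ) := W.subtype ∘ₗ prj with hNdef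
  have hNR : ∀ v ∈ R, N v = 0 := by
    intro v hv
    simp [hNdef, hprj]
    exact Submodule.linearProjOfIsCompl_apply_right' hW.symm hv
  have hNw : N w = w := by
    have := Submodule.linearProjOfIsCompl_apply_left hW.symm ⟨w, hwW⟩
    simp [hNdef, hprj]
    exact congrArg Subtype.val this
  refine ⟨A + LinearMap.toMatrix' N, ?_, ?_⟩
  · intro hBA
    have hN0 : LinearMap.toMatrix' N = 0 := by
      have := congrArg (· - A) hBA
      simpa using this
    have : N = 0 := by
      have h1 := congrArg Matrix.toLin' hN0
      rwa [Matrix.toLin'_toMatrix', map_zero] at h1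
    rw [this] at hNw
    exact hw0 (by simpa using hNw.symm)
  · refine exp_mulVec_eq_of_pow_eq A _ x ?_
    intro k
    induction k with
    | zero => simp
    | succ k ihk =>
      have hmem : A ^ k *ᵥ x ∈ R := pow_mulVec_mem_range A x k
      rw [pow_succ', pow_succ', ← Matrix.mulVec_mulVec, ← Matrix.mulVec_mulVec, ihk,
        Matrix.add_mulVec]
      have : LinearMap.toMatrix' N *ᵥ (A ^ k *ᵥ x) = 0 := by
        have happ : LinearMap.toMatrix' N *ᵥ (A ^ k *ᵥ x) = N (A ^ k *ᵥ x) := by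
          rw [← Matrix.toLin'_apply, Matrix.toLin'_toMatrix']
        rw [happ, hNR _ hmem]
      rw [this, add_zero]

/-- The Krylov determinant as a multivariate polynomial in the initial condition. -/
noncomputable def krylovPoly {n : ℕ} (A : Matrix (Fin n) (Fin n) ℝ) :
    MvPolynomial (Fin n) ℝ :=
  (Matrix.of fun i j : Fin n =>
    ∑ l : Fin n, MvPolynomial.C ((A ^ (j : ℕ)) i l) * MvPolynomial.X l).det

lemma eval_krylovPoly {n : ℕ} (A : Matrix (Fin n) (Fin n) ℝ) (x : Fin n → ℝ) :
    MvPolynomial.eval x (krylovPoly A) = (krylov A x).det := by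
  rw [krylovPoly, RingHom.map_det]
  congr 1
  ext i j
  simp [krylov, Matrix.mulVec, dotProduct, RingHom.mapMatrix_apply, Matrix.map_apply]

lemma det_krylov_eq_zero_of_bad {n : ℕ} (A B : Matrix (Fin n) (Fin n) ℝ) (x : Fin n → ℝ)
    (hBA : B ≠ A)
    (h : ∀ t : ℝ, exp (t • B) *ᵥ x = exp (t • A) *ᵥ x) :
    (krylov A x).det = 0 := by
  by_contra hdet
  apply hBA
  have hpow := pow_annihilate A B x h
  have hprod : (B - A) * krylov A x = 0 := by
    ext i j
    have := congrFun (hpow (j : ℕ)) i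
    rw [← Matrix.mulVec_mulVec] at this
    simpa [Matrix.mul_apply, Matrix.mulVec, dotProduct, krylov] using this
  have hunit : IsUnit (krylov A x).det := isUnit_iff_ne_zero.2 hdet
  have := congrArg (· * (krylov A x)⁻¹) hprod
  simp only [zero_mul, mul_assoc, Matrix.mul_nonsing_inv _ hunit, mul_one] at this
  have hsub : B - A = 0 := this
  have := sub_eq_zero.1 hsub
  exact this

end Aux

/-- If `A` is identifiable from at least one initial condition, then the set of initial
conditions from which `A` is not identifiable has Lebesgue measure zero in `ℝⁿ`. -/
theorem measure_unidentifiable_initial_conditions_eq_zero (n : ℕ)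
    (A : Matrix (Fin n) (Fin n) ℝ)
    (h : ∃ x₀ : Fin n → ℝ, IdentifiableFrom A x₀) :
    volume {x₀ : Fin n → ℝ | ¬ IdentifiableFrom A x₀} = 0 := by
  obtain ⟨y, hy⟩ := h
  have hdet_y : (krylov A y).det ≠ 0 := by
    intro hdet
    exact hy (exists_other_of_det_eq_zero A y hdet)
  have hpoly : krylovPoly A ≠ 0 := by
    intro h0
    apply hdet_y
    rw [← eval_krylovPoly, h0, map_zero]
  refine measure_mono_null ?_ (mv_zero_set_measure_zero n (krylovPoly A) hpoly)
  intro x hx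
  simp only [Set.mem_setOf_eq, IdentifiableFrom, not_not] at hx
  obtain ⟨B, hBA, htraj⟩ := hx
  show MvPolynomial.eval x (krylovPoly A) = 0
  rw [eval_krylovPoly]
  exact det_krylov_eq_zero_of_bad A B x hBA htraj
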